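/- arXiv:1502.02643 — 2 statements merged into one kernel-verified Lean document; each statement's English description precedes it below -/
import Mathlib

section
/- The optimal value of the primal proximal problem min over x in ℝⁿ of Σ_{i=1}^r ( f_i(x) + (1/(2r))‖x‖² ) equals the optimal value of the dual problem max over (y^(1),…,y^(r)) with y^(i) ∈ B(F_i) for each i of −(1/2)‖Σ_{i=1}^r y^(i)‖²; moreover, if (y^(1),…,y^(r)) is optimal for the dual, then x = −Σ_{i=1}^r y^(i) is optimal for the primal. -/
open scoped RealInnerProductSpace Pointwise

noncomputable section

/-- A set function on the ground set `V = {1,…,n}` (modeled as `Fin n`) is submodular if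
`F(A ∩ B) + F(A ∪ B) ≤ F(A) + F(B)` for all `A, B ⊆ V`. -/
def Submodular {n : ℕ} (F : Finset (Fin n) → ℝ) : Prop :=
  ∀ A B : Finset (Fin n), F (A ∩ B) + F (A ∪ B) ≤ F A + F B

/-- The base polytope `B(F) = {w ∈ ℝⁿ | ∀ A ⊆ V, w(A) ≤ F(A), and w(V) = F(V)}`. -/
def basePolytope (n : ℕ) (F : Finset (Fin n) → ℝ) : Set (EuclideanSpace ℝ (Fin n)) :=
  {w | (∀ A : Finset (Fin n), ∑ i ∈ A, w i ≤ F A) ∧ (∑ i, w i = F Finset.univ)}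

/-- `ℝ^{nr}` with the Euclidean norm, written in `r` blocks of `n` coordinates. -/
abbrev Vec (n r : ℕ) := PiLp 2 (fun _ : Fin r => EuclideanSpace ℝ (Fin n))

/-- The feasible set `𝒴 = ∏ᵢ B(Fᵢ)` of (Prox-DSM). -/
def feas (n r : ℕ) (F : Fin r → Finset (Fin n) → ℝ) : Set (Vec n r) :=
  {y | ∀ i, y i ∈ basePolytope n (F i)}

/-- The objective `g(y) = ‖∑ᵢ y⁽ⁱ⁾‖²` of (Prox-DSM). -/
def g (n r : ℕ) (y : Vec n r) : ℝ := ‖∑ i, y i‖ ^ 2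

/-- The `i`-th block of the gradient of `g`: `∇ᵢ g(y) = 2 ∑ⱼ y⁽ʲ⁾` (the same for every `i`). -/
def gradBlock (n r : ℕ) (y : Vec n r) : EuclideanSpace ℝ (Fin n) := (2 : ℝ) • ∑ j, y j

/-- The full gradient `∇g(y) ∈ ℝ^{nr}`, whose every block equals `2 ∑ⱼ y⁽ʲ⁾`. -/
def gradg (n r : ℕ) (y : Vec n r) : Vec n r := WithLp.toLp 2 (fun _ => gradBlock n r y)

/-- `y` is an optimal solution of (Prox-DSM). -/
def IsOptimal (n r : ℕ) (F : Fin r → Finset (Fin n) → ℝ) (y : Vec n r) : Prop :=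
  y ∈ feas n r F ∧ ∀ z ∈ feas n r F, g n r y ≤ g n r z

/-- The linear map `S = (1/√r)[Iₙ Iₙ ⋯ Iₙ]`, i.e. `S y = (1/√r) ∑ᵢ y⁽ⁱ⁾`. -/
def Smap (n r : ℕ) (y : Vec n r) : EuclideanSpace ℝ (Fin n) := (Real.sqrt r)⁻¹ • ∑ i, y i

/-- Distance between two sets: `d(K₁, K₂) = inf{‖k₁ - k₂‖ : k₁ ∈ K₁, k₂ ∈ K₂}`. -/
def setDist {E : Type*} [PseudoMetricSpace E] (A B : Set E) : ℝ :=
  sInf ((fun p : E × E => dist p.1 p.2) '' (A ×ˢ B))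

/-- The Lovász extension `f(x) = max_{w ∈ B(F)} ⟨w, x⟩`. -/
def lovasz (n : ℕ) (F : Finset (Fin n) → ℝ) (x : EuclideanSpace ℝ (Fin n)) : ℝ :=
  sSup ((fun w => ⟪w, x⟫) '' basePolytope n F)

/-- The primal proximal objective `∑ᵢ ( fᵢ(x) + (1/(2r))‖x‖² )`. -/
def primalObj (n r : ℕ) (F : Fin r → Finset (Fin n) → ℝ) (x : EuclideanSpace ℝ (Fin n)) : ℝ :=
  ∑ i : Fin r, (lovasz n (F i) x + (1 / (2 * (r : ℝ))) * ‖x‖ ^ 2)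

/-- The dual objective `-(1/2)‖∑ᵢ y⁽ⁱ⁾‖²`. -/
def dualObj (n r : ℕ) (y : Vec n r) : ℝ := -(1 / 2) * ‖∑ i, y i‖ ^ 2

/-!
Weak duality: for `y ∈ ∏ᵢ B(Fᵢ)` with `s = ∑ᵢ y⁽ⁱ⁾` we have `⟨y⁽ⁱ⁾, x⟩ ≤ fᵢ(x)`, so the primal
objective is at least `⟨s, x⟩ + ‖x‖²/2 ≥ -‖s‖²/2`, by `‖x + s‖² ≥ 0`.
The dual attains its maximum since each `B(Fᵢ)` is nonempty (it contains a greedy vector) and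
compact (each coordinate lies between `F(V) - F(V \ {i})` and `F({i})`). At a maximizer `y`, the
point `s` is the least-norm point of the convex set `∑ᵢ B(Fᵢ)`, and the resulting variational
inequality says that `y⁽ⁱ⁾` maximizes `⟨·, -s⟩` on `B(Fᵢ)`. Hence `fᵢ(-s) = ⟨y⁽ⁱ⁾, -s⟩`, and the
primal objective at `-s` equals `-‖s‖²/2`, the dual value, which closes the gap.
-/

open Finset

section BasePolytope

variable {n : ℕ} {F : Finset (Fin n) → ℝ}

-- `F (A ∩ {j < k})`, indexed by `k : ℕ` so that `k` can run from `0` to `n` in a telescoping sum.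
def prefixValue (F : Finset (Fin n) → ℝ) (A : Finset (Fin n)) (k : ℕ) : ℝ :=
  F {j ∈ A | j.val < k}

lemma sum_prefixValue_sub (F : Finset (Fin n) → ℝ) (A : Finset (Fin n)) :
    ∑ i : Fin n, (prefixValue F A ((i : ℕ) + 1) - prefixValue F A i) = F A - F ∅ := by
  rw [Fin.sum_univ_eq_sum_range (fun k => prefixValue F A (k + 1) - prefixValue F A k),
    Finset.sum_range_sub]
  simp [prefixValue]

lemma prefixValue_succ_sub_eq_zero {A : Finset (Fin n)} {i : Fin n} (hi : i ∉ A) :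
    prefixValue F A ((i : ℕ) + 1) - prefixValue F A i = 0 := by
  have : {j ∈ A | j.val < i.val + 1} = {j ∈ A | j.val < i.val} := by grind
  rw [prefixValue, prefixValue, this, sub_self]

def greedyBase (F : Finset (Fin n) → ℝ) : EuclideanSpace ℝ (Fin n) :=
  WithLp.toLp 2 fun i => prefixValue F univ ((i : ℕ) + 1) - prefixValue F univ i

lemma greedyBase_le_prefixValue_sub (hF : Submodular F) {A : Finset (Fin n)} {i : Fin n}
    (hi : i ∈ A) : greedyBase F i ≤ prefixValue F A ((i : ℕ) + 1) - prefixValue F A i := by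
  set before : Finset (Fin n) := {j | j.val < i.val}
  have key := hF {j ∈ A | j.val < i.val + 1} before
  have hinter : {j ∈ A | j.val < i.val + 1} ∩ before = {j ∈ A | j.val < i.val} := by grind
  have hunion : {j ∈ A | j.val < i.val + 1} ∪ before =
      ({j | j.val < i.val + 1} : Finset (Fin n)) := by grind
  rw [hinter, hunion] at key
  simp only [greedyBase, prefixValue] at key ⊢
  linarith

lemma greedyBase_mem_basePolytope (hF : Submodular F) (h0 : F ∅ = 0) :
    greedyBase F ∈ basePolytope n F := by
  refine ⟨fun A => ?_, ?_⟩
  · calc ∑ i ∈ A, greedyBase F i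
        ≤ ∑ i ∈ A, (prefixValue F A ((i : ℕ) + 1) - prefixValue F A i) :=
          sum_le_sum fun i hi => greedyBase_le_prefixValue_sub hF hi
      _ = ∑ i : Fin n, (prefixValue F A ((i : ℕ) + 1) - prefixValue F A i) :=
          sum_subset (subset_univ A) fun i _ hi => prefixValue_succ_sub_eq_zero hi
      _ = F A := by rw [sum_prefixValue_sub, h0, sub_zero]
  · simp only [greedyBase, WithLp.ofLp_toLp]
    rw [sum_prefixValue_sub, h0, sub_zero]

lemma convex_basePolytope (F : Finset (Fin n) → ℝ) : Convex ℝ (basePolytope n F) := by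
  intro u hu v hv a b ha hb hab
  have hsum (A : Finset (Fin n)) :
      ∑ i ∈ A, (a • u + b • v) i = a * ∑ i ∈ A, u i + b * ∑ i ∈ A, v i := by
    simp only [PiLp.add_apply, PiLp.smul_apply, smul_eq_mul, sum_add_distrib, mul_sum]
  refine ⟨fun A => ?_, ?_⟩
  · rw [hsum]
    calc a * ∑ i ∈ A, u i + b * ∑ i ∈ A, v i ≤ a * F A + b * F A := by
          gcongr
          exacts [hu.1 A, hv.1 A]
      _ = F A := by rw [← add_mul, hab, one_mul]
  · rw [hsum, hu.2, hv.2, ← add_mul, hab, one_mul]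

lemma isClosed_basePolytope (F : Finset (Fin n) → ℝ) : IsClosed (basePolytope n F) := by
  have hcont (A : Finset (Fin n)) : Continuous fun w : EuclideanSpace ℝ (Fin n) => ∑ i ∈ A, w i :=
    continuous_finsetSum _ fun i _ => PiLp.continuous_apply 2 _ i
  rw [basePolytope, Set.ofPred_and, Set.ofPred_forall]
  exact (isClosed_iInter fun A => isClosed_le (hcont A) continuous_const).inter
    (isClosed_eq (hcont univ) continuous_const)

lemma mem_basePolytope_apply_mem_Icc {w : EuclideanSpace ℝ (Fin n)}
    (hw : w ∈ basePolytope n F) (i : Fin n) :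
    w i ∈ Set.Icc (F univ - F (univ.erase i)) (F {i}) := by
  have hsplit := add_sum_erase univ w (mem_univ i)
  have hrest := hw.1 (univ.erase i)
  exact ⟨by linarith [hw.2], by simpa using hw.1 {i}⟩

lemma isCompact_basePolytope (F : Finset (Fin n) → ℝ) : IsCompact (basePolytope n F) := by
  have hbox : IsCompact (WithLp.toLp 2 ''
      Set.Icc (fun i => F univ - F (univ.erase i)) fun i => F {i}) :=
    isCompact_Icc.image (PiLp.continuous_toLp 2 _)
  refine hbox.of_isClosed_subset (isClosed_basePolytope F) fun w hw =>
    ⟨WithLp.ofLp w, ⟨fun i => ?_, fun i => ?_⟩, rfl⟩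
  exacts [(mem_basePolytope_apply_mem_Icc hw i).1, (mem_basePolytope_apply_mem_Icc hw i).2]

lemma inner_le_lovasz {w : EuclideanSpace ℝ (Fin n)} (hw : w ∈ basePolytope n F)
    (x : EuclideanSpace ℝ (Fin n)) : ⟪w, x⟫ ≤ lovasz n F x :=
  le_csSup (((isCompact_basePolytope F).image (continuous_id.inner continuous_const)).bddAbove)
    (Set.mem_image_of_mem _ hw)

end BasePolytope

lemma real_inner_sub_nonneg_of_isMinOn_norm {E : Type*} [NormedAddCommGroup E]
    [InnerProductSpace ℝ E] {K : Set E} (hK : Convex ℝ K) {v w : E} (hv : v ∈ K) (hw : w ∈ K)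
    (hmin : IsMinOn norm K v) : 0 ≤ ⟪v, w - v⟫ := by
  have hproj : ‖0 - v‖ = ⨅ u : K, ‖0 - (u : E)‖ := by
    simpa only [zero_sub, norm_neg] using (hmin.iInf_eq hv).symm
  have := (norm_eq_iInf_iff_real_inner_le_zero hK hv).mp hproj w hw
  rw [zero_sub, inner_neg_left] at this
  linarith

section Duality

variable {n r : ℕ} {F : Fin r → Finset (Fin n) → ℝ}

lemma feas_eq_image_pi (F : Fin r → Finset (Fin n) → ℝ) :
    feas n r F = WithLp.toLp 2 '' Set.univ.pi fun i => basePolytope n (F i) := by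
  ext y
  exact ⟨fun hy => ⟨y.ofLp, fun i _ => hy i, rfl⟩, by rintro ⟨y, hy, rfl⟩ i; exact hy i trivial⟩

lemma convex_feas (F : Fin r → Finset (Fin n) → ℝ) : Convex ℝ (feas n r F) := by
  intro u hu v hv a b ha hb hab i
  exact convex_basePolytope (F i) (hu i) (hv i) ha hb hab

lemma isCompact_feas (F : Fin r → Finset (Fin n) → ℝ) : IsCompact (feas n r F) := by
  rw [feas_eq_image_pi]
  exact (isCompact_univ_pi fun i => isCompact_basePolytope (F i)).image (PiLp.continuous_toLp 2 _)

lemma feas_nonempty (hF : ∀ i, Submodular (F i)) (h0 : ∀ i, F i ∅ = 0) :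
    (feas n r F).Nonempty :=
  ⟨WithLp.toLp 2 fun i => greedyBase (F i), fun i => greedyBase_mem_basePolytope (hF i) (h0 i)⟩

lemma continuous_dualObj : Continuous (dualObj n r) := by
  unfold dualObj
  fun_prop

lemma primalObj_eq (hr : r ≠ 0) (F : Fin r → Finset (Fin n) → ℝ) (x : EuclideanSpace ℝ (Fin n)) :
    primalObj n r F x = ∑ i, lovasz n (F i) x + ‖x‖ ^ 2 / 2 := by
  rw [primalObj, sum_add_distrib, sum_const, card_univ, Fintype.card_fin, nsmul_eq_mul]
  field_simp

lemma dualObj_le_primalObj (hr : r ≠ 0) {y : Vec n r} (hy : y ∈ feas n r F)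
    (x : EuclideanSpace ℝ (Fin n)) : dualObj n r y ≤ primalObj n r F x := by
  have hlin : ⟪∑ i, y i, x⟫ ≤ ∑ i, lovasz n (F i) x := by
    rw [sum_inner]
    exact sum_le_sum fun i _ => inner_le_lovasz (hy i) x
  have hsq : 0 ≤ ‖x + ∑ i, y i‖ ^ 2 := sq_nonneg _
  rw [norm_add_sq_real, real_inner_comm] at hsq
  rw [primalObj_eq hr, dualObj]
  linarith

lemma sum_toLp_update (y : Vec n r) (i : Fin r) (w : EuclideanSpace ℝ (Fin n)) :
    ∑ j, (WithLp.toLp 2 (Function.update y.ofLp i w) : Vec n r) j = ∑ j, y j + (w - y i) := by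
  rw [WithLp.ofLp_toLp, sum_update_of_mem (mem_univ i), ← add_sum_erase univ y (mem_univ i),
    sdiff_singleton_eq_erase]
  abel

lemma real_inner_sum_sub_nonneg_of_isMaxOn_dualObj {y : Vec n r} (hy : y ∈ feas n r F)
    (hmax : IsMaxOn (dualObj n r) (feas n r F) y) (i : Fin r) {w : EuclideanSpace ℝ (Fin n)}
    (hw : w ∈ basePolytope n (F i)) : 0 ≤ ⟪∑ j, y j, w - y i⟫ := by
  set sumMap : Vec n r → EuclideanSpace ℝ (Fin n) := fun z => ∑ j, z j
  have hconv : Convex ℝ (sumMap '' feas n r F) := by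
    refine (convex_feas F).is_linear_image ⟨fun a b => ?_, fun c a => ?_⟩ <;>
      simp [sumMap, sum_add_distrib, smul_sum]
  have hmin : IsMinOn norm (sumMap '' feas n r F) (sumMap y) := by
    rw [isMinOn_iff]
    rintro _ ⟨z, hz, rfl⟩
    have hle := isMaxOn_iff.mp hmax z hz
    rw [dualObj, dualObj] at hle
    exact (pow_le_pow_iff_left₀ (norm_nonneg _) (norm_nonneg _) two_ne_zero).mp (by linarith)
  have hupd : WithLp.toLp 2 (Function.update y.ofLp i w) ∈ feas n r F := by
    intro j
    rcases eq_or_ne j i with rfl | hj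
    · simpa using hw
    · simpa [hj] using hy j
  have := real_inner_sub_nonneg_of_isMinOn_norm hconv ⟨y, hy, rfl⟩ ⟨_, hupd, rfl⟩ hmin
  simp only [sumMap] at this
  rwa [sum_toLp_update, add_sub_cancel_left] at this

lemma lovasz_neg_sum_eq_of_isMaxOn_dualObj {y : Vec n r} (hy : y ∈ feas n r F)
    (hmax : IsMaxOn (dualObj n r) (feas n r F) y) (i : Fin r) :
    lovasz n (F i) (-∑ j, y j) = ⟪y i, -∑ j, y j⟫ := by
  refine IsGreatest.csSup_eq ⟨Set.mem_image_of_mem _ (hy i), ?_⟩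
  rintro _ ⟨w, hw, rfl⟩
  have := real_inner_sum_sub_nonneg_of_isMaxOn_dualObj hy hmax i hw
  rw [inner_sub_right, real_inner_comm w, real_inner_comm (y i)] at this
  simp only [inner_neg_right]
  linarith

lemma primalObj_neg_sum_eq_dualObj (hr : r ≠ 0) {y : Vec n r} (hy : y ∈ feas n r F)
    (hmax : IsMaxOn (dualObj n r) (feas n r F) y) :
    primalObj n r F (-∑ j, y j) = dualObj n r y := by
  rw [primalObj_eq hr, sum_congr rfl fun i _ => lovasz_neg_sum_eq_of_isMaxOn_dualObj hy hmax i,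
    ← sum_inner, inner_neg_right, real_inner_self_eq_norm_sq, norm_neg, dualObj]
  ring

end Duality

theorem statement0_general (n r : ℕ) (hr : 1 ≤ r)
    (F : Fin r → Finset (Fin n) → ℝ)
    (hsub : ∀ i, Submodular (F i)) (hnorm : ∀ i, F i ∅ = 0) :
    sInf (Set.range (primalObj n r F)) = sSup (dualObj n r '' feas n r F) ∧
    ∀ y ∈ feas n r F, (∀ z ∈ feas n r F, dualObj n r z ≤ dualObj n r y) →
      ∀ x : EuclideanSpace ℝ (Fin n),
        primalObj n r F (-∑ i, y i) ≤ primalObj n r F x := by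
  have hr0 : r ≠ 0 := Nat.one_le_iff_ne_zero.mp hr
  obtain ⟨y₀, hy₀, hmax₀⟩ := (isCompact_feas F).exists_isMaxOn (feas_nonempty hsub hnorm)
    continuous_dualObj.continuousOn
  refine ⟨?_, fun y hy hopt x => ?_⟩
  · have hprimal : IsLeast (Set.range (primalObj n r F)) (dualObj n r y₀) :=
      ⟨⟨_, primalObj_neg_sum_eq_dualObj hr0 hy₀ hmax₀⟩,
        by rintro _ ⟨x, rfl⟩; exact dualObj_le_primalObj hr0 hy₀ x⟩
    have hdual : IsGreatest (dualObj n r '' feas n r F) (dualObj n r y₀) :=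
      ⟨Set.mem_image_of_mem _ hy₀, by rintro _ ⟨z, hz, rfl⟩; exact hmax₀ hz⟩
    rw [hprimal.csInf_eq, hdual.csSup_eq]
  · rw [primalObj_neg_sum_eq_dualObj hr0 hy (isMaxOn_iff.mpr hopt)]
    exact dualObj_le_primalObj hr0 hy x

/-- The optimal value of the primal proximal problem equals the optimal
value of the dual problem, and if `y` is dual optimal then `x = -∑ᵢ y⁽ⁱ⁾` is primal optimal. -/
theorem statement0 (n r : ℕ) (hn : 1 ≤ n) (hr : 1 ≤ r)
    (F : Fin r → Finset (Fin n) → ℝ)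
    (hsub : ∀ i, Submodular (F i)) (hnorm : ∀ i, F i ∅ = 0) :
    sInf (Set.range (primalObj n r F)) = sSup (dualObj n r '' feas n r F) ∧
    ∀ y ∈ feas n r F, (∀ z ∈ feas n r F, dualObj n r z ≤ dualObj n r y) →
      ∀ x : EuclideanSpace ℝ (Fin n),
        primalObj n r F (-∑ i, y i) ≤ primalObj n r F x :=
  statement0_general n r hr F hsub hnorm
end
end

section
/- Let y ∈ 𝒴 be a feasible solution to (Prox-DSM) and let y* be an optimal solution to (Prox-DSM) that minimizes ‖y − y*‖ over all optimal solutions. Then ‖S(y − y*)‖ ≥ (1/(nr)) ‖y − y*‖. -/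
open scoped RealInnerProductSpace Pointwise

noncomputable section

/-!
Let `z` be feasible with `∑ᵢ z⁽ⁱ⁾ = ∑ᵢ y*⁽ⁱ⁾`; then `g z = g y*`, so `z` is optimal and
`‖y - y*‖ ≤ ‖y - z‖`. It therefore suffices to find such a `z` with
`‖z - y‖ ≤ √n ‖∑ᵢ (y⁽ⁱ⁾ - y*⁽ⁱ⁾)‖₁ ≤ n ‖∑ᵢ (y⁽ⁱ⁾ - y*⁽ⁱ⁾)‖ = n √r ‖S (y - y*)‖`.

It is found by augmenting along paths of the exchange graph of the base polytopes. If
`∑ᵢ z⁽ⁱ⁾ ≠ ∑ᵢ y*⁽ⁱ⁾`, the set `R` of coordinates that cannot be reached from a coordinate with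
surplus is tight for every `z⁽ⁱ⁾`, so `∑ᵢ z⁽ⁱ⁾(R) = ∑ᵢ Fᵢ(R) ≥ ∑ᵢ y*⁽ⁱ⁾(R)`; as `R` has no
surplus it has no deficit either, hence a coordinate with deficit is reachable. Pushing `α` along a
shortest such path lowers the `ℓ¹` discrepancy by `2α` and, as the path has fewer than `n` arcs
and repeats no coordinate, moves `z` by at most `2 √n α`. Instead of iterating, take a
minimiser of the discrepancy among the feasible points whose distance from `y` stays within `√n`
times the discrepancy removed: its discrepancy is `0`.
-/

namespace ProxDSM

open Finset Filter Topology

section BasePolytope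

variable {n : ℕ} {F : Finset (Fin n) → ℝ} {x : EuclideanSpace ℝ (Fin n)} {A B : Finset (Fin n)}

def IsTight (F : Finset (Fin n) → ℝ) (x : EuclideanSpace ℝ (Fin n)) (A : Finset (Fin n)) :
    Prop :=
  ∑ u ∈ A, x u = F A

theorem IsTight.inter_union (hF : Submodular F) (hx : x ∈ basePolytope n F)
    (hA : IsTight F x A) (hB : IsTight F x B) :
    IsTight F x (A ∩ B) ∧ IsTight F x (A ∪ B) := by
  have hsplit := sum_union_inter (s₁ := A) (s₂ := B) (f := x)
  have hsub := hF A B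
  have hinter := hx.1 (A ∩ B)
  have hunion := hx.1 (A ∪ B)
  unfold IsTight at *
  constructor <;> linarith

theorem exists_minimal_isTight (hF : Submodular F) (hx : x ∈ basePolytope n F) (v : Fin n) :
    ∃ D, IsTight F x D ∧ v ∈ D ∧ ∀ A, IsTight F x A → v ∈ A → D ⊆ A := by
  classical
  let T := univ.filter fun A => IsTight F x A ∧ v ∈ A
  have hT : T.Nonempty := ⟨univ, mem_filter.2 ⟨mem_univ _, hx.2, mem_univ v⟩⟩
  have hmem : T.inf' hT id ∈ {A | IsTight F x A ∧ v ∈ A} :=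
    inf'_mem {A | IsTight F x A ∧ v ∈ A} (fun A hA B hB =>
      ⟨(hA.1.inter_union hF hx hB.1).1, mem_inter.2 ⟨hA.2, hB.2⟩⟩) _ _ _
      (fun A hA => (mem_filter.1 hA).2)
  exact ⟨T.inf' hT id, hmem.1, hmem.2, fun A hA hvA =>
    inf'_le id (mem_filter.2 ⟨mem_univ A, hA, hvA⟩)⟩

/-- `R` is the union of the minimal tight sets of its elements. -/
theorem isTight_of_closed (hF : Submodular F) (hx : x ∈ basePolytope n F) {R : Finset (Fin n)}
    (hR : R.Nonempty) (hclosed : ∀ v ∈ R, ∀ u, (∀ A, IsTight F x A → v ∈ A → u ∈ A) → u ∈ R) :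
    IsTight F x R := by
  choose D hDtight hvD hDmin using exists_minimal_isTight hF hx
  have hsup : R.sup' hR D = R :=
    le_antisymm
      (sup'_le _ _ fun v hv u hu => hclosed v hv u fun A hA hvA => hDmin v A hA hvA hu)
      fun v hv => le_sup' D hv (hvD v)
  rw [← hsup]
  exact sup'_mem {A | IsTight F x A} (fun A hA B hB => (IsTight.inter_union hF hx hA hB).2)
    _ _ _ fun v _ => hDtight v

theorem isClosed_basePolytope (F : Finset (Fin n) → ℝ) : IsClosed (basePolytope n F) := by
  simp only [basePolytope, Set.ofPred_and, Set.ofPred_forall]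
  exact (isClosed_iInter fun A => isClosed_le (by fun_prop) continuous_const).inter
    (isClosed_eq (by fun_prop) continuous_const)

theorem eventually_add_smul_mem_basePolytope {h : EuclideanSpace ℝ (Fin n)}
    (hx : x ∈ basePolytope n F) (hsum : ∑ u, h u = 0)
    (htight : ∀ A, IsTight F x A → ∑ u ∈ A, h u ≤ 0) :
    ∀ᶠ α in 𝓝[>] (0 : ℝ), x + α • h ∈ basePolytope n F := by
  have hlin : ∀ (α : ℝ) (A : Finset (Fin n)),
      ∑ u ∈ A, (x + α • h) u = ∑ u ∈ A, x u + α * ∑ u ∈ A, h u := by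
    intro α A
    simp [sum_add_distrib, mul_sum]
  refine (eventually_all.2 fun A => ?_).and (Eventually.of_forall fun α => ?_)
  · rw [eventually_congr (Eventually.of_forall fun α => by rw [hlin α A])]
    rcases (hx.1 A).lt_or_eq with hslack | htightA
    · refine nhdsWithin_le_nhds (ContinuousAt.eventually_lt (by fun_prop) continuousAt_const ?_
        |>.mono fun α hα => hα.le)
      simpa using hslack
    · filter_upwards [self_mem_nhdsWithin] with α (hα : 0 < α)
      nlinarith [htight A htightA]
  · rw [hlin α, hsum, mul_zero, add_zero]
    exact hx.2

theorem sum_abs_le_sqrt_mul_norm (v : EuclideanSpace ℝ (Fin n)) :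
    ∑ u, |v u| ≤ √n * ‖v‖ := by
  refine (pow_le_pow_iff_left₀ (sum_nonneg fun _ _ => abs_nonneg _) (by positivity)
    two_ne_zero).1 ?_
  rw [mul_pow, Real.sq_sqrt n.cast_nonneg, EuclideanSpace.norm_sq_eq]
  simpa using sq_sum_le_card_mul_sum_sq (s := univ) (f := fun u => |v u|)

end BasePolytope

section ExchangePath

variable {n r : ℕ} {F : Fin r → Finset (Fin n) → ℝ} {x w : Vec n r} {k : ℕ} {p q : ℕ → Fin n}
  {b : ℕ → Fin r}

/-- Along arc `j` of the path, block `b j` can move mass from `p j` to `p (j + 1)`. -/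
def IsExchangePath (F : Fin r → Finset (Fin n) → ℝ) (x : Vec n r) (k : ℕ) (p : ℕ → Fin n)
    (b : ℕ → Fin r) : Prop :=
  ∀ j < k, ∀ A, IsTight (F (b j)) (x (b j)) A → p (j + 1) ∈ A → p j ∈ A

def IsAugmentingPath (F : Fin r → Finset (Fin n) → ℝ) (x w : Vec n r) (k : ℕ) (p : ℕ → Fin n)
    (b : ℕ → Fin r) : Prop :=
  IsExchangePath F x k p b ∧ (∑ i, w i) (p 0) < (∑ i, x i) (p 0) ∧
    (∑ i, x i) (p k) < (∑ i, w i) (p k)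

theorem IsExchangePath.snoc (hp : IsExchangePath F x k p b) {i : Fin r} {v : Fin n}
    (hv : ∀ A, IsTight (F i) (x i) A → v ∈ A → p k ∈ A) :
    IsExchangePath F x (k + 1) (fun j => if j ≤ k then p j else v)
      (fun j => if j < k then b j else i) := by
  intro j hj A
  rcases Nat.lt_succ_iff_lt_or_eq.1 hj with hjk | rfl
  · simpa [hjk, hjk.le, Nat.succ_le_of_lt hjk] using hp j hjk A
  · simpa using hv A

theorem IsExchangePath.splice (hp : IsExchangePath F x k p b) {a a' : ℕ} (haa' : a < a')
    (ha'k : a' ≤ k) (hpa : p a = p a') :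
    IsExchangePath F x (k - (a' - a)) (fun j => if j ≤ a then p j else p (j + (a' - a)))
      (fun j => if j < a then b j else b (j + (a' - a))) := by
  intro j hj A
  rcases lt_or_ge j a with hja | haj
  · simpa [hja, hja.le, Nat.succ_le_of_lt hja] using hp j (by omega) A
  · have hshift : (if j ≤ a then p j else p (j + (a' - a))) = p (j + (a' - a)) := by
      split_ifs with hja
      · rw [le_antisymm hja haj, hpa]; congr 1; omega
      · rfl
    simpa [hshift, not_lt.2 haj, show ¬ j + 1 ≤ a by omega,
      show j + (a' - a) + 1 = j + 1 + (a' - a) by omega] using hp (j + (a' - a)) (by omega) A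

theorem sum_blockSum_apply (hx : x ∈ feas n r F) :
    ∑ u, (∑ i, x i) u = ∑ i, F i univ := by
  simp only [WithLp.ofLp_sum, Finset.sum_apply]
  rw [sum_comm]
  exact sum_congr rfl fun i _ => (hx i).2

theorem exists_blockSum_lt (hx : x ∈ feas n r F) (hw : w ∈ feas n r F)
    (hne : ∑ i, x i ≠ ∑ i, w i) : ∃ d, (∑ i, x i) d < (∑ i, w i) d := by
  by_contra! hge
  have hbal : ∑ u, (∑ i, w i) u = ∑ u, (∑ i, x i) u := by
    rw [sum_blockSum_apply hw, sum_blockSum_apply hx]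
  have heq := (sum_eq_sum_iff_of_le fun u _ => hge u).1 hbal
  exact hne (WithLp.ofLp_injective 2 (funext fun u => (heq u (mem_univ u)).symm))

theorem exists_isAugmentingPath (hF : ∀ i, Submodular (F i)) (hx : x ∈ feas n r F)
    (hw : w ∈ feas n r F) (hne : ∑ i, x i ≠ ∑ i, w i) :
    ∃ k p b, IsAugmentingPath F x w k p b := by
  classical
  by_contra! hnone
  obtain ⟨i₀⟩ : Nonempty (Fin r) := by
    by_contra hempty
    rw [not_nonempty_iff] at hempty
    exact hne (by simp [univ_eq_empty])
  let R := univ.filter fun v => ¬ ∃ k p b, IsExchangePath F x k p b ∧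
    (∑ i, w i) (p 0) < (∑ i, x i) (p 0) ∧ p k = v
  obtain ⟨d, hd⟩ := exists_blockSum_lt hx hw hne
  have hdR : d ∈ R := by
    simp only [R, mem_filter, mem_univ, true_and]
    rintro ⟨k, p, b, hp, hp0, rfl⟩
    exact hnone k p b ⟨hp, hp0, hd⟩
  have hRtight : ∀ i, IsTight (F i) (x i) R := fun i =>
    isTight_of_closed (hF i) (hx i) ⟨d, hdR⟩ fun v hv u hu => by
      simp only [R, mem_filter, mem_univ, true_and] at hv ⊢
      rintro ⟨k, p, b, hp, hp0, rfl⟩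
      exact hv ⟨k + 1, _, _, hp.snoc hu, by simpa using hp0, by simp⟩
  have hle : ∀ u ∈ R, (∑ i, x i) u ≤ (∑ i, w i) u := fun u hu =>
    not_lt.1 fun hlt => (mem_filter.1 hu).2 ⟨0, fun _ => u, fun _ => i₀,
      fun j hj => absurd hj (Nat.not_lt_zero j), hlt, rfl⟩
  have hlt : ∑ u ∈ R, (∑ i, x i) u < ∑ u ∈ R, (∑ i, w i) u :=
    sum_lt_sum hle ⟨d, hdR, hd⟩
  have hge : ∑ u ∈ R, (∑ i, w i) u ≤ ∑ u ∈ R, (∑ i, x i) u := by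
    simp only [WithLp.ofLp_sum, Finset.sum_apply]
    rw [sum_comm, sum_comm (s := R)]
    exact sum_le_sum fun i _ => (hw i).1 R |>.trans_eq (hRtight i).symm
  exact hlt.not_ge hge

/-- A shortest augmenting path: a repeated coordinate could be spliced out. -/
theorem exists_isAugmentingPath_injOn (hF : ∀ i, Submodular (F i)) (hx : x ∈ feas n r F)
    (hw : w ∈ feas n r F) (hne : ∑ i, x i ≠ ∑ i, w i) :
    ∃ k p b, IsAugmentingPath F x w k p b ∧ Set.InjOn p (Set.Iic k) := by
  classical
  have hex := exists_isAugmentingPath hF hx hw hne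
  obtain ⟨p, b, hp⟩ := Nat.find_spec hex
  refine ⟨_, p, b, hp, fun a ha a' ha' hpa => ?_⟩
  by_contra hne'
  wlog hlt : a < a' generalizing a a'
  · exact this a' ha' a ha hpa.symm (Ne.symm hne') (by omega)
  have ha'k : a' ≤ Nat.find hex := ha'
  have hlast : (if Nat.find hex - (a' - a) ≤ a then p (Nat.find hex - (a' - a))
      else p (Nat.find hex - (a' - a) + (a' - a))) = p (Nat.find hex) := by
    split_ifs with h
    · have ha'_eq : a' = Nat.find hex := by omega
      rw [show Nat.find hex - (a' - a) = a by omega, hpa, ha'_eq]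
    · congr 1; omega
  refine Nat.find_min hex (show Nat.find hex - (a' - a) < Nat.find hex by omega)
    ⟨_, _, hp.1.splice hlt ha' hpa, by simpa using hp.2.1, ?_⟩
  simpa only [hlast] using hp.2.2

theorem lt_of_injOn_Iic (hp : Set.InjOn p (Set.Iic k)) : k < n := by
  have hcard := card_le_card_of_injOn p (s := range (k + 1)) (t := univ)
    (fun _ _ => mem_univ _)
    (hp.mono fun j hj => Set.mem_Iic.2 (Nat.lt_succ_iff.1 (mem_range.1 hj)))
  simpa using hcard

def arcCount (k : ℕ) (q : ℕ → Fin n) (b : ℕ → Fin r) (i : Fin r) (u : Fin n) : ℝ :=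
  ∑ j ∈ range k, if b j = i ∧ q j = u then 1 else 0

theorem arcCount_nonneg (i : Fin r) (u : Fin n) : 0 ≤ arcCount k q b i u :=
  sum_nonneg fun _ _ => by positivity

theorem arcCount_le_one (hq : Set.InjOn q (Set.Iio k)) (i : Fin r) (u : Fin n) :
    arcCount k q b i u ≤ 1 := by
  rw [arcCount, sum_boole]
  exact_mod_cast card_le_one.2 fun j hj j' hj' => by
    simp only [mem_filter, mem_range] at hj hj'
    exact hq (Set.mem_Iio.2 hj.1) (Set.mem_Iio.2 hj'.1) (hj.2.2.trans hj'.2.2.symm)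

theorem sum_arcCount_mem (i : Fin r) (A : Finset (Fin n)) :
    ∑ u ∈ A, arcCount k q b i u = ∑ j ∈ range k, if b j = i ∧ q j ∈ A then 1 else 0 := by
  simp only [arcCount]
  rw [sum_comm]
  refine sum_congr rfl fun j _ => ?_
  by_cases hb : b j = i <;> simp [hb]

theorem sum_arcCount_block (u : Fin n) :
    ∑ i, arcCount k q b i u = ∑ j ∈ range k, if q j = u then 1 else 0 := by
  simp only [arcCount]
  rw [sum_comm]
  refine sum_congr rfl fun j _ => ?_
  by_cases hq : q j = u <;> simp [hq]

theorem sum_sum_arcCount : ∑ i, ∑ u, arcCount k q b i u = k := by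
  simp_rw [sum_arcCount_mem, mem_univ, and_true]
  rw [sum_comm]
  simp

def pathDirection (k : ℕ) (p : ℕ → Fin n) (b : ℕ → Fin r) : Vec n r :=
  WithLp.toLp 2 fun i => WithLp.toLp 2 fun u =>
    arcCount k (fun j => p (j + 1)) b i u - arcCount k p b i u

theorem pathDirection_apply (i : Fin r) (u : Fin n) :
    pathDirection k p b i u = arcCount k (fun j => p (j + 1)) b i u - arcCount k p b i u :=
  rfl

theorem sum_pathDirection_univ (i : Fin r) : ∑ u, pathDirection k p b i u = 0 := by
  simp [pathDirection_apply, sum_arcCount_mem]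

theorem IsExchangePath.sum_pathDirection_nonpos
    (hp : IsExchangePath F x k p b) (i : Fin r) {A : Finset (Fin n)}
    (hA : IsTight (F i) (x i) A) : ∑ u ∈ A, pathDirection k p b i u ≤ 0 := by
  simp only [pathDirection_apply, sum_sub_distrib, sum_arcCount_mem, sub_nonpos]
  refine sum_le_sum fun j hj => ?_
  by_cases hj' : b j = i ∧ p (j + 1) ∈ A
  · obtain ⟨rfl, hpA⟩ := hj'
    simp [hpA, hp j (mem_range.1 hj) A hA hpA]
  · simp only [hj', if_false]
    positivity

theorem blockSum_pathDirection_apply (u : Fin n) :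
    (∑ i, pathDirection k p b i) u = (if p k = u then 1 else 0) - (if p 0 = u then 1 else 0) := by
  simp only [WithLp.ofLp_sum, Finset.sum_apply, pathDirection_apply, sum_sub_distrib,
    sum_arcCount_block]
  rw [← sum_sub_distrib]
  exact sum_range_sub (fun j => if p j = u then (1 : ℝ) else 0) k

theorem norm_pathDirection_sq_le (hp : Set.InjOn p (Set.Iic k)) :
    ‖pathDirection k p b‖ ^ 2 ≤ 2 * k := by
  have hinj : Set.InjOn p (Set.Iio k) := hp.mono Set.Iio_subset_Iic_self
  have hinj_succ : Set.InjOn (fun j => p (j + 1)) (Set.Iio k) := fun j hj j' hj' h =>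
    Nat.succ_injective (hp (Set.mem_Iic.2 (Nat.succ_le_of_lt hj))
      (Set.mem_Iic.2 (Nat.succ_le_of_lt hj')) h)
  have hcoord : ∀ i u, (pathDirection k p b i u) ^ 2 ≤
      arcCount k (fun j => p (j + 1)) b i u + arcCount k p b i u := fun i u => by
    rw [pathDirection_apply]
    nlinarith [arcCount_nonneg (k := k) (q := fun j => p (j + 1)) (b := b) i u,
      arcCount_nonneg (k := k) (q := p) (b := b) i u, arcCount_le_one (b := b) hinj i u,
      arcCount_le_one (b := b) hinj_succ i u]
  calc ‖pathDirection k p b‖ ^ 2 = ∑ i, ∑ u, (pathDirection k p b i u) ^ 2 := by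
        simp [PiLp.norm_sq_eq_of_L2]
    _ ≤ ∑ i, ∑ u, (arcCount k (fun j => p (j + 1)) b i u + arcCount k p b i u) :=
        sum_le_sum fun i _ => sum_le_sum fun u _ => hcoord i u
    _ = 2 * k := by
        simp only [sum_add_distrib, sum_sum_arcCount]
        ring

theorem norm_pathDirection_le (hp : Set.InjOn p (Set.Iic k)) :
    ‖pathDirection k p b‖ ≤ 2 * √n := by
  have hkn : (k : ℝ) ≤ n := by exact_mod_cast (lt_of_injOn_Iic hp).le
  refine (pow_le_pow_iff_left₀ (norm_nonneg _) (by positivity) two_ne_zero).1 ?_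
  rw [mul_pow, Real.sq_sqrt n.cast_nonneg]
  linarith [norm_pathDirection_sq_le (b := b) hp]

end ExchangePath

section Discrepancy

variable {n r : ℕ} {F : Fin r → Finset (Fin n) → ℝ} {y z w : Vec n r}

theorem isClosed_feas : IsClosed (feas n r F) := by
  simp only [feas, Set.ofPred_forall]
  exact isClosed_iInter fun i => (isClosed_basePolytope (F i)).preimage (by fun_prop)

def discrepancy (c : EuclideanSpace ℝ (Fin n)) (x : Vec n r) : ℝ :=
  ∑ u, |(∑ i, x i) u - c u|

theorem discrepancy_nonneg (c : EuclideanSpace ℝ (Fin n)) (x : Vec n r) :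
    0 ≤ discrepancy c x :=
  sum_nonneg fun _ _ => abs_nonneg _

theorem continuous_discrepancy (c : EuclideanSpace ℝ (Fin n)) :
    Continuous (discrepancy (r := r) c) := by
  unfold discrepancy
  fun_prop

theorem discrepancy_eq_zero_iff {c : EuclideanSpace ℝ (Fin n)} {x : Vec n r} :
    discrepancy c x = 0 ↔ ∑ i, x i = c := by
  rw [discrepancy, sum_eq_zero_iff_of_nonneg fun _ _ => abs_nonneg _]
  simp only [mem_univ, true_implies, abs_eq_zero, sub_eq_zero]
  exact ⟨fun h => WithLp.ofLp_injective 2 (funext h), fun h u => by rw [h]⟩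

theorem sum_abs_add_sub_single (s c : Fin n → ℝ) {a d : Fin n} (had : a ≠ d) {α : ℝ}
    (hα : 0 ≤ α) (ha : α ≤ s a - c a) (hd : α ≤ c d - s d) :
    ∑ u, |s u + α * ((if d = u then 1 else 0) - (if a = u then 1 else 0)) - c u| =
      ∑ u, |s u - c u| - 2 * α := by
  have hpt : ∀ u, |s u + α * ((if d = u then 1 else 0) - (if a = u then 1 else 0)) - c u| =
      |s u - c u| - ((if a = u then α else 0) + (if d = u then α else 0)) := by
    intro u
    by_cases hau : a = u
    · subst hau
      simp only [if_neg had.symm, if_true]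
      rw [abs_of_nonneg (by linarith), abs_of_nonneg (by linarith)]
      ring
    by_cases hdu : d = u
    · subst hdu
      simp only [if_neg had, if_true]
      rw [abs_of_nonpos (by linarith), abs_of_nonpos (by linarith)]
      ring
    simp [hau, hdu]
  rw [sum_congr rfl fun u _ => hpt u, sum_sub_distrib, sum_add_distrib,
    sum_ite_eq, sum_ite_eq]
  simp only [mem_univ, if_true]
  ring

theorem exists_feas_discrepancy_lt (hF : ∀ i, Submodular (F i)) (hz : z ∈ feas n r F)
    (hw : w ∈ feas n r F) (hne : ∑ i, z i ≠ ∑ i, w i) :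
    ∃ x ∈ feas n r F, discrepancy (∑ i, w i) x < discrepancy (∑ i, w i) z ∧
      ‖x - z‖ ≤ √n * (discrepancy (∑ i, w i) z - discrepancy (∑ i, w i) x) := by
  obtain ⟨k, p, b, ⟨hpath, hsurplus, hdeficit⟩, hinj⟩ :=
    exists_isAugmentingPath_injOn hF hz hw hne
  set h := pathDirection k p b
  set c := ∑ i, w i
  have hfeas : ∀ᶠ α in 𝓝[>] (0 : ℝ), z + α • h ∈ feas n r F :=
    eventually_all.2 fun i => eventually_add_smul_mem_basePolytope (hz i)
      (sum_pathDirection_univ i) fun _ hA => hpath.sum_pathDirection_nonpos i hA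
  have hsmall : ∀ᶠ α in 𝓝[>] (0 : ℝ),
      α ≤ (∑ i, z i) (p 0) - c (p 0) ∧ α ≤ c (p k) - (∑ i, z i) (p k) :=
    nhdsWithin_le_nhds <| (eventually_le_nhds (sub_pos.2 hsurplus)).and
      (eventually_le_nhds (sub_pos.2 hdeficit))
  obtain ⟨α, hαfeas, ⟨hα0, hαk⟩, hαpos : 0 < α⟩ :=
    (hfeas.and (hsmall.and self_mem_nhdsWithin)).exists
  have hp0k : p 0 ≠ p k := fun heq => by rw [heq] at hsurplus; linarith
  have hdisc : discrepancy c (z + α • h) = discrepancy c z - 2 * α := by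
    have hsum : ∀ u, (∑ i, (z + α • h) i) u = (∑ i, z i) u +
        α * ((if p k = u then 1 else 0) - (if p 0 = u then 1 else 0)) := fun u => by
      rw [← blockSum_pathDirection_apply (b := b)]
      simp [h, sum_add_distrib, mul_sum]
    simp only [discrepancy, hsum]
    exact sum_abs_add_sub_single _ _ hp0k hαpos.le hα0 hαk
  refine ⟨z + α • h, hαfeas, by linarith, ?_⟩
  rw [add_sub_cancel_left, hdisc, norm_smul, Real.norm_of_nonneg hαpos.le]
  nlinarith [norm_pathDirection_le (b := b) hinj]

theorem exists_feas_blockSum_eq (hF : ∀ i, Submodular (F i)) (hy : y ∈ feas n r F)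
    (hw : w ∈ feas n r F) :
    ∃ z ∈ feas n r F, ∑ i, z i = ∑ i, w i ∧ ‖z - y‖ ≤ √n * discrepancy (∑ i, w i) y := by
  set ψ := discrepancy (r := r) (∑ i, w i)
  set K := feas n r F ∩ {x | ‖x - y‖ + √n * ψ x ≤ √n * ψ y}
  have hKsub : K ⊆ Metric.closedBall y (√n * ψ y) := fun x hx => by
    have hxK : ‖x - y‖ + √n * ψ x ≤ √n * ψ y := hx.2
    rw [Metric.mem_closedBall, dist_eq_norm]
    nlinarith [discrepancy_nonneg (∑ i, w i) x, Real.sqrt_nonneg n]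
  have hK : IsCompact K :=
    Metric.isCompact_of_isClosed_isBounded
      (isClosed_feas.inter (isClosed_le
        ((continuous_id.sub continuous_const).norm.add
          (continuous_const.mul (continuous_discrepancy _))) continuous_const))
      (Metric.isBounded_closedBall.subset hKsub)
  obtain ⟨z, ⟨hzF, hzK⟩, hmin⟩ :=
    hK.exists_isMinOn ⟨y, hy, by simp⟩ (continuous_discrepancy _).continuousOn
  have hzw : ∑ i, z i = ∑ i, w i := by
    by_contra hne
    obtain ⟨x, hxF, hlt, hxz⟩ := exists_feas_discrepancy_lt hF hzF hw hne
    have hxK : x ∈ K := ⟨hxF, by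
      have htri : ‖x - y‖ ≤ ‖x - z‖ + ‖z - y‖ := norm_sub_le_norm_sub_add_norm_sub x z y
      have hzK' : ‖z - y‖ + √n * ψ z ≤ √n * ψ y := hzK
      show ‖x - y‖ + √n * ψ x ≤ √n * ψ y
      linarith⟩
    exact (hmin hxK).not_gt hlt
  refine ⟨z, hzF, hzw, ?_⟩
  have hψz : ψ z = 0 := discrepancy_eq_zero_iff.2 hzw
  simpa [hψz] using hzK

end Discrepancy

end ProxDSM

theorem statement1_general (n r : ℕ) (hn : 1 ≤ n) (hr : 1 ≤ r)
    (F : Fin r → Finset (Fin n) → ℝ)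
    (hsub : ∀ i, Submodular (F i))
    (y ystar : Vec n r) (hy : y ∈ feas n r F)
    (hopt : IsOptimal n r F ystar)
    (hclosest : ∀ z : Vec n r, IsOptimal n r F z → ‖y - ystar‖ ≤ ‖y - z‖) :
    ‖Smap n r (y - ystar)‖ ≥ (1 / ((n : ℝ) * r)) * ‖y - ystar‖ := by
  obtain ⟨z, hzF, hzsum, hzy⟩ := ProxDSM.exists_feas_blockSum_eq hsub hy hopt.1
  have hzopt : IsOptimal n r F z := ⟨hzF, fun x hx => by simpa [g, hzsum] using hopt.2 x hx⟩
  set v := ∑ i, (y - ystar) i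
  have hdist : ‖y - ystar‖ ≤ n * ‖v‖ := calc
    ‖y - ystar‖ ≤ ‖z - y‖ := (hclosest z hzopt).trans_eq (norm_sub_rev _ _)
    _ ≤ √n * ProxDSM.discrepancy (∑ i, ystar i) y := hzy
    _ = √n * ∑ u, |v u| := by simp [ProxDSM.discrepancy, v, Finset.sum_sub_distrib]
    _ ≤ √n * (√n * ‖v‖) := by gcongr; exact ProxDSM.sum_abs_le_sqrt_mul_norm v
    _ = n * ‖v‖ := by rw [← mul_assoc, Real.mul_self_sqrt n.cast_nonneg]
  have hSmap : ‖Smap n r (y - ystar)‖ = ‖v‖ / √r := by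
    simp [Smap, v, norm_smul, div_eq_inv_mul]
  have hn0 : (0 : ℝ) < n := by exact_mod_cast hn
  have hr1 : (1 : ℝ) ≤ r := by exact_mod_cast hr
  rw [ge_iff_le, hSmap]
  calc 1 / ((n : ℝ) * r) * ‖y - ystar‖ ≤ 1 / ((n : ℝ) * r) * (n * ‖v‖) := by gcongr
    _ = ‖v‖ / r := by field_simp
    _ ≤ ‖v‖ / √r := div_le_div_of_nonneg_left (norm_nonneg v) (by positivity)
        (Real.sqrt_le_self_iff.2 (Or.inr hr1))

/-- If `y ∈ 𝒴` is feasible for (Prox-DSM) and `y*` is an optimal solution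
closest to `y`, then `‖S(y - y*)‖ ≥ (1/(nr)) ‖y - y*‖`. -/
theorem statement1 (n r : ℕ) (hn : 1 ≤ n) (hr : 1 ≤ r)
    (F : Fin r → Finset (Fin n) → ℝ)
    (hsub : ∀ i, Submodular (F i)) (hnorm : ∀ i, F i ∅ = 0)
    (y ystar : Vec n r) (hy : y ∈ feas n r F)
    (hopt : IsOptimal n r F ystar)
    (hclosest : ∀ z : Vec n r, IsOptimal n r F z → ‖y - ystar‖ ≤ ‖y - z‖) :
    ‖Smap n r (y - ystar)‖ ≥ (1 / ((n : ℝ) * r)) * ‖y - ystar‖ :=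
  statement1_general n r hn hr F hsub y ystar hy hopt hclosest
end
end
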